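/- Fix n ≥ 1 and set b = ⌊log₂ n⌋ + 2. In ℤ[X₀, …, X_{b−1}], let I be the ideal generated by Xᵢ² − (2·Xᵢ + X_{i+1}) for 0 ≤ i ≤ b−2 together with X_{b−1}². If g is a multilinear polynomial (every exponent in every monomial of its support is at most 1) with (1 + X₀)ⁿ − g ∈ I, then evaluating g at X₀ = X₁ = ⋯ = X_{b−1} = 1 gives the central binomial coefficient C(2n, n) = (2n)!/(n!)². -/

import Mathlib

/-!
Substitute `Xᵢ ↦ T^(2^i) + T^(-2^i) + 1` in `ℤ[T, T⁻¹]`. This respects `Xᵢ² = 2Xᵢ + X_{i+1}`,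
sends `1 + X₀` to `T⁻¹(1 + T)²` and `X_{b-1}²` to `(T^M + T^(-M) + 1)²` with `M = 2^(b-1)`.
The linear functional `T^j ↦ u(j / M)` (and `0` when `M ∤ j`), where `u = kernelSeq` solves the
linear recurrence with characteristic polynomial `(x² + x + 1)²` and `u 0 = 1`, `u (±1) = 0`,
kills the ideal generated by `(T^M + T^(-M) + 1)²` and reads off the constant coefficient of
every Laurent polynomial supported in `(-2M, 2M)`. Both sides of `(1 + X₀)ⁿ ≡ g` land in that window: a
multilinear monomial becomes a product of distinct trinomials `T^(2^i) + T^(-2^i) + 1`, `i < b`,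
whose constant coefficient is `1` by uniqueness of signed binary expansions, while
`T⁻ⁿ(1 + T)^(2n)` has constant coefficient `C(2n, n)` and `n < M`.
-/

open MvPolynomial

/-- The generators of the ideal `I`: `Xᵢ² − (2Xᵢ + X_{i+1})` for `i ≤ b-2`, and `X_{b-1}²`. -/
noncomputable def gens (b : ℕ) : Fin b → MvPolynomial (Fin b) ℤ := fun i =>
  if h : (i : ℕ) + 1 < b then X i ^ 2 - (2 * X i + X ⟨(i : ℕ) + 1, h⟩) else X i ^ 2

open LaurentPolynomial

def kernelSeq (m : ℤ) : ℤ :=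
  if m % 3 = 0 then m + 1 else if m % 3 = 2 then -(m + 1) else 0

lemma kernelSeq_recurrence (m : ℤ) :
    kernelSeq (m + 2) + kernelSeq (m - 2) + 2 * kernelSeq (m + 1) + 2 * kernelSeq (m - 1)
      + 3 * kernelSeq m = 0 := by
  simp only [kernelSeq]; split_ifs <;> omega

def dilatedKernelSeq (M j : ℤ) : ℤ := if M ∣ j then kernelSeq (j / M) else 0

lemma dilatedKernelSeq_zero (M : ℤ) : dilatedKernelSeq M 0 = 1 := by
  simp [dilatedKernelSeq, kernelSeq]

lemma dilatedKernelSeq_eq_zero {M j : ℤ} (hM : 0 < M) (hj : |j| < 2 * M) (hj0 : j ≠ 0) :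
    dilatedKernelSeq M j = 0 := by
  rw [dilatedKernelSeq, ite_eq_right_iff]
  rintro ⟨m, rfl⟩
  have hm : m = 1 ∨ m = -1 := by
    rw [abs_mul, abs_of_pos hM] at hj
    have hm2 : |m| < 2 := lt_of_mul_lt_mul_left (by linarith) hM.le
    have hm0 : m ≠ 0 := by rintro rfl; simp at hj0
    rw [abs_lt] at hm2; omega
  rw [Int.mul_ediv_cancel_left _ hM.ne']
  rcases hm with rfl | rfl <;> rfl

lemma dilatedKernelSeq_recurrence {M : ℤ} (hM : M ≠ 0) (j : ℤ) :
    dilatedKernelSeq M (j + 2 * M) + dilatedKernelSeq M (j - 2 * M)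
      + 2 * dilatedKernelSeq M (j + M) + 2 * dilatedKernelSeq M (j - M)
      + 3 * dilatedKernelSeq M j = 0 := by
  by_cases h : M ∣ j
  · obtain ⟨m, rfl⟩ := h
    have hshift : ∀ k, M * m + k * M = M * (m + k) := fun k => by ring
    rw [show M * m + M = M * (m + 1) by ring, show M * m - M = M * (m - 1) by ring,
      hshift, sub_eq_add_neg, ← neg_mul, hshift]
    simp only [dilatedKernelSeq, dvd_mul_right, if_true, Int.mul_ediv_cancel_left _ hM]
    simpa [← sub_eq_add_neg] using kernelSeq_recurrence m
  · have h' : ∀ k : ℤ, ¬ M ∣ j + k * M := fun k hk =>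
      h ((dvd_add_left (dvd_mul_left M k)).mp hk)
    have := h' 2; have := h' (-2); have := h' 1; have := h' (-1)
    simp_all [dilatedKernelSeq, sub_eq_add_neg]

noncomputable def trinomial (m : ℤ) : ℤ[T;T⁻¹] := T m + T (-m) + 1

lemma trinomial_sq (m : ℤ) :
    trinomial m ^ 2 = T (2 * m) + T (-(2 * m)) + 2 * T m + 2 * T (-m) + 3 := by
  have h1 : (T m : ℤ[T;T⁻¹]) * T (-m) = 1 := by rw [← T_add, add_neg_cancel, T_zero]
  have h2 : (T m : ℤ[T;T⁻¹]) ^ 2 = T (2 * m) := by rw [T_pow]; norm_num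
  have h3 : (T (-m) : ℤ[T;T⁻¹]) ^ 2 = T (-(2 * m)) := by rw [T_pow]; ring_nf
  rw [trinomial]; linear_combination h2 + h3 + 2 * h1

lemma trinomial_sq_eq (m : ℤ) : trinomial m ^ 2 = trinomial (2 * m) + 2 * trinomial m := by
  rw [trinomial_sq, trinomial, trinomial]; ring

noncomputable def kernelFunctional (M : ℤ) : ℤ[T;T⁻¹] →ₗ[ℤ] ℤ :=
  (AddMonoidAlgebra.basis ℤ ℤ).constr ℤ (dilatedKernelSeq M)

lemma kernelFunctional_T (M j : ℤ) : kernelFunctional M (T j) = dilatedKernelSeq M j :=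
  (AddMonoidAlgebra.basis ℤ ℤ).constr_basis ℤ _ j

lemma kernelFunctional_apply (M : ℤ) (f : ℤ[T;T⁻¹]) :
    kernelFunctional M f = f.coeff.sum fun j c => c * dilatedKernelSeq M j :=
  (AddMonoidAlgebra.basis ℤ ℤ).constr_apply ℤ _ f

lemma kernelFunctional_mul_trinomial_sq {M : ℤ} (hM : M ≠ 0) (q : ℤ[T;T⁻¹]) :
    kernelFunctional M (q * trinomial M ^ 2) = 0 := by
  suffices kernelFunctional M ∘ₗ LinearMap.mulRight ℤ (trinomial M ^ 2) = 0 from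
    LinearMap.congr_fun this q
  refine (AddMonoidAlgebra.basis ℤ ℤ).ext fun j => ?_
  rw [LinearMap.comp_apply, LinearMap.mulRight_apply, LinearMap.zero_apply,
    AddMonoidAlgebra.basis_apply, ← T]
  have expand : T j * trinomial M ^ 2 = T (j + 2 * M) + T (j - 2 * M) + (2 : ℤ) • T (j + M)
      + (2 : ℤ) • T (j - M) + (3 : ℤ) • T j := by
    simp only [trinomial_sq, T_add, T_sub, zsmul_eq_mul]; push_cast; ring
  simp only [expand, map_add, map_zsmul, kernelFunctional_T, smul_eq_mul]
  exact dilatedKernelSeq_recurrence hM j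

lemma kernelFunctional_eq_coeff_zero {M : ℤ} (hM : 0 < M) {f : ℤ[T;T⁻¹]}
    (hf : ∀ j, f.coeff j ≠ 0 → |j| < 2 * M) : kernelFunctional M f = f.coeff 0 := by
  rw [kernelFunctional_apply, Finsupp.sum_eq_single 0]
  · rw [dilatedKernelSeq_zero, mul_one]
  · intro j hj hj0
    rw [dilatedKernelSeq_eq_zero hM (hf j hj) hj0, mul_zero]
  · intro; rw [zero_mul]

lemma coeff_mul_trinomial (f : ℤ[T;T⁻¹]) (m j : ℤ) :
    (f * trinomial m).coeff j = f.coeff (j - m) + f.coeff (j + m) + f.coeff j := by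
  simp only [trinomial, mul_add, mul_one, T, AddMonoidAlgebra.coeff_add, Finsupp.add_apply,
    AddMonoidAlgebra.coeff_mul_single_apply, neg_neg, sub_eq_add_neg]

lemma coeff_prod_trinomial_two_pow (s : Finset ℕ) :
    (∏ i ∈ s, trinomial (2 ^ i)).coeff 0 = 1 ∧
      ∀ j, (∏ i ∈ s, trinomial (2 ^ i)).coeff j ≠ 0 → |j| ≤ ∑ i ∈ s, 2 ^ i := by
  induction s using Finset.induction_on_max with
  | empty =>
    simp only [Finset.prod_empty, Finset.sum_empty, AddMonoidAlgebra.one_def,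
      AddMonoidAlgebra.coeff_single, Finsupp.single_apply]
    refine ⟨if_pos trivial, fun j hj => ?_⟩
    rw [ite_ne_right_iff] at hj
    simp [← hj.1]
  | insert a s ha ih =>
    obtain ⟨ih_zero, ih_supp⟩ := ih
    have hsum : ∑ i ∈ s, (2 : ℤ) ^ i < 2 ^ a := by exact_mod_cast Nat.geomSum_lt le_rfl ha
    have hprod : ∏ i ∈ insert a s, trinomial (2 ^ i) =
        (∏ i ∈ s, trinomial (2 ^ i)) * trinomial (2 ^ a) := by
      rw [Finset.prod_insert fun h => (ha a h).false, mul_comm]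
    rw [hprod, Finset.sum_insert fun h => (ha a h).false]
    refine ⟨?_, fun j hj => ?_⟩
    · have hout : ∀ j, 2 ^ a ≤ |j| → (∏ i ∈ s, trinomial (2 ^ i)).coeff j = 0 := fun j hj =>
        not_not.mp fun h => (ih_supp j h).not_gt (hsum.trans_le hj)
      rw [coeff_mul_trinomial, zero_add, zero_sub, hout _ (by simp), hout _ (by simp), ih_zero]
      ring
    · rw [coeff_mul_trinomial] at hj
      have hpos : (0 : ℤ) < 2 ^ a := by positivity
      have hcases : ∃ k ∈ ({j - 2 ^ a, j + 2 ^ a, j} : Finset ℤ),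
          (∏ i ∈ s, trinomial (2 ^ i)).coeff k ≠ 0 := by
        by_contra! h
        simp_all
      obtain ⟨k, hk, hk0⟩ := hcases
      have hbound := abs_le.mp (ih_supp k hk0)
      simp only [Finset.mem_insert, Finset.mem_singleton] at hk
      rw [abs_le]
      rcases hk with rfl | rfl | rfl <;> constructor <;> linarith

lemma kernelFunctional_prod_trinomial_two_pow {M : ℤ} {b : ℕ} (hM : 2 ^ b ≤ 2 * M)
    {s : Finset ℕ} (hs : ∀ i ∈ s, i < b) :
    kernelFunctional M (∏ i ∈ s, trinomial (2 ^ i)) = 1 := by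
  obtain ⟨hzero, hsupp⟩ := coeff_prod_trinomial_two_pow s
  have hsum : ∑ i ∈ s, (2 : ℤ) ^ i < 2 ^ b := by exact_mod_cast Nat.geomSum_lt le_rfl hs
  have hMpos : 0 < M := by linarith [(by positivity : (0 : ℤ) < 2 ^ b)]
  rw [kernelFunctional_eq_coeff_zero hMpos fun j hj => (hsupp j hj).trans_lt (hsum.trans_le hM),
    hzero]

noncomputable def trinomialAlgHom (b : ℕ) : MvPolynomial (Fin b) ℤ →ₐ[ℤ] ℤ[T;T⁻¹] :=
  aeval fun i => trinomial (2 ^ (i : ℕ))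

lemma kernelFunctional_trinomialAlgHom_of_multilinear {b : ℕ} {M : ℤ} (hM : 2 ^ b ≤ 2 * M)
    (g : MvPolynomial (Fin b) ℤ) (hg : ∀ m ∈ g.support, ∀ i, m i ≤ 1) :
    kernelFunctional M (trinomialAlgHom b g) = eval (fun _ => 1) g := by
  conv_lhs => rw [g.as_sum]
  conv_rhs => rw [g.as_sum]
  rw [map_sum, map_sum, map_sum]
  refine Finset.sum_congr rfl fun m hm => ?_
  have hprod : (m.prod fun i k => trinomial (2 ^ (i : ℕ)) ^ k) =
      ∏ i ∈ m.support.map Fin.valEmbedding, trinomial (2 ^ i) := by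
    rw [Finset.prod_map, Finsupp.prod]
    refine Finset.prod_congr rfl fun i hi => ?_
    rw [le_antisymm (hg m hm i) (Nat.one_le_iff_ne_zero.mpr (Finsupp.mem_support_iff.mp hi)),
      pow_one]
    rfl
  rw [trinomialAlgHom, aeval_monomial, eval_monomial, hprod, ← Algebra.smul_def, map_smul,
    kernelFunctional_prod_trinomial_two_pow hM (by simp), smul_eq_mul]
  simp [Finsupp.prod]

lemma one_add_trinomial_one_pow (n : ℕ) :
    (1 + trinomial 1) ^ n =
      ∑ k ∈ Finset.range (2 * n + 1), ((2 * n).choose k : ℤ) • T (k - n) := by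
  have hfactor : 1 + trinomial 1 = T (-1) * (T 1 + 1) ^ 2 := by
    have h1 : (T (-1) : ℤ[T;T⁻¹]) * T 1 = 1 := by rw [← T_add, neg_add_cancel, T_zero]
    have h2 : (T (-1) : ℤ[T;T⁻¹]) * T 1 ^ 2 = T 1 := by rw [T_pow, ← T_add]; norm_num
    rw [trinomial]; linear_combination -2 * h1 - h2
  rw [hfactor, mul_pow, ← pow_mul, add_pow, Finset.mul_sum, T_pow]
  refine Finset.sum_congr rfl fun k _ => ?_
  rw [one_pow, mul_one, T_pow, mul_one, mul_neg_one, zsmul_eq_mul, sub_eq_neg_add, T_add]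
  push_cast
  ring

lemma kernelFunctional_one_add_trinomial_one_pow {M : ℤ} {n : ℕ} (hn : n < M) :
    kernelFunctional M ((1 + trinomial 1) ^ n) = (2 * n).choose n := by
  rw [one_add_trinomial_one_pow, map_sum, Finset.sum_eq_single_of_mem n (by simp; omega)]
  · rw [map_zsmul, kernelFunctional_T, sub_self, dilatedKernelSeq_zero, smul_eq_mul, mul_one]
  · intro k hk hkn
    rw [map_zsmul, kernelFunctional_T, dilatedKernelSeq_eq_zero (by omega) _ (by omega), smul_zero]
    rw [Finset.mem_range] at hk
    rw [abs_lt]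
    omega

lemma trinomialAlgHom_gens_mem (b : ℕ) (i : Fin b) :
    trinomialAlgHom b (gens b i) ∈ Ideal.span {trinomial (2 ^ (b - 1)) ^ 2} := by
  rw [gens]
  split_ifs with h
  · convert Ideal.zero_mem _
    simp only [map_sub, map_add, map_pow, map_mul, map_ofNat, trinomialAlgHom, aeval_X]
    rw [pow_succ (2 : ℤ) (i : ℕ), mul_comm _ (2 : ℤ), trinomial_sq_eq]
    ring
  · rw [map_pow, trinomialAlgHom, aeval_X, show (i : ℕ) = b - 1 by omega]
    exact Ideal.mem_span_singleton_self _

lemma kernelFunctional_trinomialAlgHom_eq_zero {b : ℕ} {p : MvPolynomial (Fin b) ℤ}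
    (hp : p ∈ Ideal.span (Set.range (gens b))) :
    kernelFunctional (2 ^ (b - 1)) (trinomialAlgHom b p) = 0 := by
  have hmap : Ideal.map (trinomialAlgHom b) (Ideal.span (Set.range (gens b))) ≤
      Ideal.span {trinomial (2 ^ (b - 1)) ^ 2} := by
    rw [Ideal.map_span, Ideal.span_le, ← Set.range_comp, Set.range_subset_iff]
    exact trinomialAlgHom_gens_mem b
  obtain ⟨q, hq⟩ := Ideal.mem_span_singleton'.mp (hmap (Ideal.mem_map_of_mem _ hp))
  rw [← hq]
  exact kernelFunctional_mul_trinomial_sq (by positivity) q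

theorem stmt3 (n : ℕ) (b : ℕ) (hb : b = Nat.log 2 n + 2)
    (g : MvPolynomial (Fin b) ℤ)
    (hml : ∀ m ∈ g.support, ∀ i : Fin b, m i ≤ 1)
    (hg : (1 + X (⟨0, by omega⟩ : Fin b)) ^ n - g ∈ Ideal.span (Set.range (gens b))) :
    eval (fun _ : Fin b => (1 : ℤ)) g = (2 * n).choose n := by
  have hnM : (n : ℤ) < 2 ^ (b - 1) := by
    rw [show b - 1 = Nat.log 2 n + 1 by omega]
    exact_mod_cast Nat.lt_pow_succ_log_self one_lt_two n
  have hbM : (2 : ℤ) ^ b ≤ 2 * 2 ^ (b - 1) := by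
    rw [← pow_succ']; exact pow_le_pow_right₀ one_le_two (by omega)
  have hzero := kernelFunctional_trinomialAlgHom_eq_zero hg
  rw [map_sub, map_sub, kernelFunctional_trinomialAlgHom_of_multilinear hbM g hml, map_pow,
    map_add, map_one, trinomialAlgHom, aeval_X, pow_zero,
    kernelFunctional_one_add_trinomial_one_pow hnM] at hzero
  exact (sub_eq_zero.mp hzero).symm
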